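/- Let r1 ≥ r2 ≥ 0 be integers. Let a, b, c, d be real numbers satisfying a ≤ b ≤ c ≤ d, a + d = b + c = r1 + r2 + 3, a ≥ 0, and a + b = r2 + 1. Let e, f be real numbers with 0 ≤ e ≤ f and e + f = r1 − r2 + 1. If there exist x ∈ {a, b, c, d} and y ∈ {e, f} with x + y = r1 + 2, then necessarily a = 0 and e = 0, and moreover either (x, y) = (b, f) or (x, y) = (c, e). -/
import Mathlib


/-- Valuation form of the lemma on the exceptional case (B): if one of the pairwise
sums `x + y` (with `x` among the ordered valuations `a ≤ b ≤ c ≤ d` of the Hecke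
parameters of a Klingen-ordinary `Π`, and `y` among the valuations `e ≤ f` of the
Hecke parameters of the `GL₂` form) equals `r1 + 2`, then `a = 0`, `e = 0`, and
`(x, y) = (b, f)` or `(x, y) = (c, e)`. -/
theorem exceptional_caseB_valuations (r1 r2 : ℤ) (hr2 : 0 ≤ r2) (hr12 : r2 ≤ r1)
    (a b c d e f x y : ℝ)
    (hab : a ≤ b) (hbc : b ≤ c) (hcd : c ≤ d)
    (had : a + d = (r1 : ℝ) + r2 + 3) (hbc' : b + c = (r1 : ℝ) + r2 + 3)
    (ha : 0 ≤ a) (hKl : a + b = (r2 : ℝ) + 1)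
    (he : 0 ≤ e) (hef : e ≤ f) (hef' : e + f = (r1 : ℝ) - r2 + 1)
    (hx : x = a ∨ x = b ∨ x = c ∨ x = d) (hy : y = e ∨ y = f)
    (hxy : x + y = (r1 : ℝ) + 2) :
    a = 0 ∧ e = 0 ∧ ((x = b ∧ y = f) ∨ (x = c ∧ y = e)) := by
  have hr2' : (0:ℝ) ≤ r2 := by exact_mod_cast hr2
  have hr12' : (r2:ℝ) ≤ r1 := by exact_mod_cast hr12
  have ha0 : a = 0 ∧ e = 0 := by
    rcases hx with h | h | h | h <;> rcases hy with h2 | h2 <;> subst h <;> subst h2 <;>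
      constructor <;> linarith
  refine ⟨ha0.1, ha0.2, ?_⟩
  rcases hx with h | h | h | h <;> rcases hy with h2 | h2 <;> subst h <;> subst h2
  · exfalso; linarith [ha0.1, ha0.2]
  · exfalso; linarith [ha0.1, ha0.2]
  · exfalso; linarith [ha0.1, ha0.2]
  · exact Or.inl ⟨rfl, rfl⟩
  · exact Or.inr ⟨rfl, rfl⟩
  · exfalso; linarith [ha0.1, ha0.2]
  · exfalso; linarith [ha0.1, ha0.2]
  · exfalso; linarith [ha0.1, ha0.2]
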